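/- Suppose the kernel has the exact finite-rank form Φ(u,v) = U(u)ᵀU(v), that U_jᵀU_j is invertible, and that C(x_{j+1}) ≠ 0. Then the scaled reduction in variance satisfies R(x_{j+1}) = (C(x_{j+1})ᵀ C(x))² / ‖C(x_{j+1})‖₂²; in particular, if additionally C(x) ≠ 0, then R(x_{j+1}) = ‖C(x)‖₂² · cos²(ϑ), where ϑ is the angle between C(x) and C(x_{j+1}), i.e., cos(ϑ) = C(x_{j+1})ᵀC(x) / (‖C(x_{j+1})‖₂ ‖C(x)‖₂). -/

import Mathlib

open Matrix

/-- Euclidean (ℓ2) norm of a vector in ℝ^n. -/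
noncomputable def vecEnorm {n : ℕ} (v : Fin n → ℝ) : ℝ := Real.sqrt (v ⬝ᵥ v)

lemma dotProduct_self_nonneg' {n : ℕ} (v : Fin n → ℝ) : 0 ≤ v ⬝ᵥ v :=
  Finset.sum_nonneg fun i _ => mul_self_nonneg _

lemma vecEnorm_sq {n : ℕ} (v : Fin n → ℝ) : vecEnorm v ^ 2 = v ⬝ᵥ v := by
  rw [vecEnorm, Real.sq_sqrt (dotProduct_self_nonneg' v)]

/-- **Theorem 2 (feature representation of the reduction in variance).** For an
exact finite-rank kernel `Φ(u,v) = U(u)ᵀU(v)` with `UjᵀUj` invertible and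
`C(x_{j+1}) ≠ 0`, the reduction in variance satisfies
`R(x_{j+1}) = (C(x_{j+1})ᵀC(x))² / ‖C(x_{j+1})‖₂²`, and if also `C(x) ≠ 0` then
`R(x_{j+1}) = ‖C(x)‖₂² cos²(ϑ)` for the angle `ϑ` between `C(x)` and `C(x_{j+1})`. -/
theorem feature_reduction_in_variance (d D j : ℕ)
    (U : (Fin d → ℝ) → Fin D → ℝ)
    (Φ : (Fin d → ℝ) → (Fin d → ℝ) → ℝ)
    (hΦ : ∀ u v, Φ u v = U u ⬝ᵥ U v)
    (x : Fin d → ℝ) (xs : Fin j → (Fin d → ℝ)) (xnew : Fin d → ℝ)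
    (Uj : Matrix (Fin D) (Fin j) ℝ)
    (hUj : Uj = Matrix.of fun a i => U (xs i) a)
    (hinv : IsUnit (Ujᵀ * Uj).det)
    (Kj : Matrix (Fin j) (Fin j) ℝ)
    (hKj : Kj = Matrix.of fun i k => Φ (xs i) (xs k))
    (kj : (Fin d → ℝ) → Fin j → ℝ)
    (hkj : ∀ u, kj u = fun i => Φ (xs i) u)
    (C : (Fin d → ℝ) → Fin D → ℝ)
    (hC : ∀ t, C t = (1 - Uj * (Ujᵀ * Uj)⁻¹ * Ujᵀ) *ᵥ U t)
    (hCnew : C xnew ≠ 0) :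
    (Φ x xnew - kj xnew ⬝ᵥ Kj⁻¹ *ᵥ kj x) ^ 2 /
        (Φ xnew xnew - kj xnew ⬝ᵥ Kj⁻¹ *ᵥ kj xnew) =
      (C xnew ⬝ᵥ C x) ^ 2 / vecEnorm (C xnew) ^ 2 ∧
    (C x ≠ 0 →
      (Φ x xnew - kj xnew ⬝ᵥ Kj⁻¹ *ᵥ kj x) ^ 2 /
          (Φ xnew xnew - kj xnew ⬝ᵥ Kj⁻¹ *ᵥ kj xnew) =
        vecEnorm (C x) ^ 2 *
          (C xnew ⬝ᵥ C x / (vecEnorm (C xnew) * vecEnorm (C x))) ^ 2) := by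
  set A : Matrix (Fin j) (Fin j) ℝ := Ujᵀ * Uj with hA
  set Q : Matrix (Fin D) (Fin D) ℝ := Uj * A⁻¹ * Ujᵀ with hQ
  set P : Matrix (Fin D) (Fin D) ℝ := 1 - Q with hP
  have hAsym : Aᵀ = A := by rw [hA, transpose_mul, transpose_transpose]
  have hQsym : Qᵀ = Q := by
    rw [hQ, transpose_mul, transpose_mul, transpose_transpose,
      Matrix.transpose_nonsing_inv, hAsym]
    rw [Matrix.mul_assoc]
  have hPsym : Pᵀ = P := by rw [hP, transpose_sub, transpose_one, hQsym]
  have hQQ : Q * Q = Q := by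
    rw [hQ]
    have : Uj * A⁻¹ * Ujᵀ * (Uj * A⁻¹ * Ujᵀ)
        = Uj * (A⁻¹ * (Ujᵀ * Uj) * A⁻¹) * Ujᵀ := by
      simp only [Matrix.mul_assoc]
    rw [this, ← hA, Matrix.nonsing_inv_mul A hinv, Matrix.one_mul]
  have hPP : P * P = P := by
    rw [hP, Matrix.sub_mul, Matrix.mul_sub, Matrix.mul_sub, hQQ,
      Matrix.one_mul, Matrix.mul_one, sub_self, sub_zero, Matrix.one_mul]
  have hKjA : Kj = A := by
    rw [hKj, hA, hUj]
    ext i k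
    simp [Matrix.mul_apply, hΦ, dotProduct]
  have hkjU : ∀ u, kj u = Ujᵀ *ᵥ U u := by
    intro u
    rw [hkj, hUj]
    ext i
    simp [Matrix.mulVec, hΦ, dotProduct]
  have key : ∀ u v, Φ u v - kj v ⬝ᵥ Kj⁻¹ *ᵥ kj u = C v ⬝ᵥ C u := by
    intro u v
    have h1 : kj v ⬝ᵥ Kj⁻¹ *ᵥ kj u = U v ⬝ᵥ Q *ᵥ U u := by
      rw [hkjU, hkjU, hKjA, Matrix.mulVec_transpose, ← Matrix.dotProduct_mulVec,
        Matrix.mulVec_mulVec, Matrix.mulVec_mulVec, hQ]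
    have h2 : C v ⬝ᵥ C u = U v ⬝ᵥ P *ᵥ U u := by
      rw [hC, hC]
      calc (P *ᵥ U v) ⬝ᵥ (P *ᵥ U u)
          = ((Pᵀ)ᵀ *ᵥ U v) ⬝ᵥ (P *ᵥ U u) := by rw [transpose_transpose]
        _ = (U v ᵥ* Pᵀ) ⬝ᵥ (P *ᵥ U u) := by rw [Matrix.mulVec_transpose]
        _ = U v ⬝ᵥ Pᵀ *ᵥ (P *ᵥ U u) := by conv_rhs => rw [Matrix.dotProduct_mulVec]
        _ = U v ⬝ᵥ (Pᵀ * P) *ᵥ U u := by rw [Matrix.mulVec_mulVec]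
        _ = U v ⬝ᵥ P *ᵥ U u := by rw [hPsym, hPP]
    rw [h1, h2, hΦ, hP, Matrix.sub_mulVec, Matrix.one_mulVec,
      dotProduct_sub, dotProduct_comm]
  have knum := key x xnew
  have kden := key xnew xnew
  have hden : vecEnorm (C xnew) ^ 2 = C xnew ⬝ᵥ C xnew := vecEnorm_sq _
  have hne : C xnew ⬝ᵥ C xnew ≠ 0 :=
    fun h => hCnew (dotProduct_self_eq_zero.mp h)
  constructor
  · rw [knum, kden, hden]
  · intro hCx
    have hnx : C x ⬝ᵥ C x ≠ 0 :=
      fun h => hCx (dotProduct_self_eq_zero.mp h)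
    have e1 : vecEnorm (C xnew) ≠ 0 := by
      intro h
      apply hne
      rw [← hden, h]; ring
    have e2 : vecEnorm (C x) ≠ 0 := by
      intro h
      apply hnx
      rw [← vecEnorm_sq (C x), h]; ring
    rw [knum, kden, ← hden]
    field_simp
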